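/- For every n ≥ 1, dsf(4n-3) ≡ dsf(4n+3) (mod 2). -/
import Mathlib


def dsf : ℕ → ℕ
  | 0 => 0
  | 1 => 0
  | 2 => 0
  | 3 => 1
  | n + 4 => if (n + 4) % 2 = 0 then dsf ((n + 4) / 2) else dsf (n + 3) + dsf (n + 2)
decreasing_by all_goals omega

lemma dsf_ev (m r : ℕ) (h : m = 2 * r) (h2 : 4 ≤ m) : dsf m = dsf r := by
  obtain ⟨j, rfl⟩ : ∃ j, m = j + 4 := ⟨m - 4, by omega⟩
  rw [dsf, if_pos (by omega)]
  congr 1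
  omega

lemma dsf_od (m : ℕ) (h : m % 2 = 1) (h2 : 5 ≤ m) : dsf m = dsf (m - 1) + dsf (m - 2) := by
  obtain ⟨j, rfl⟩ : ∃ j, m = j + 4 := ⟨m - 4, by omega⟩
  rw [dsf, if_neg (by omega)]
  congr 2 <;> omega

theorem dsf_cong (n : ℕ) (hn : 1 ≤ n) : dsf (4 * n - 3) ≡ dsf (4 * n + 3) [MOD 2] := by
  rcases n with _ | _ | k
  · omega
  case succ.succ =>
    have h11 : dsf (4 * k + 11) = dsf (4 * k + 10) + dsf (4 * k + 9) := by
      rw [dsf_od _ (by omega) (by omega)] <;> congr 1 <;> omega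
    have h10 : dsf (4 * k + 10) = dsf (2 * k + 5) := dsf_ev _ _ (by ring) (by omega)
    have h9 : dsf (4 * k + 9) = dsf (4 * k + 8) + dsf (4 * k + 7) := by
      rw [dsf_od _ (by omega) (by omega)] <;> congr 1 <;> omega
    have h8 : dsf (4 * k + 8) = dsf (2 * k + 4) := dsf_ev _ _ (by ring) (by omega)
    have h7 : dsf (4 * k + 7) = dsf (4 * k + 6) + dsf (4 * k + 5) := by
      rw [dsf_od _ (by omega) (by omega)] <;> congr 1 <;> omega
    have h6 : dsf (4 * k + 6) = dsf (2 * k + 3) := dsf_ev _ _ (by ring) (by omega)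
    have ho : dsf (2 * k + 5) = dsf (2 * k + 4) + dsf (2 * k + 3) := by
      rw [dsf_od _ (by omega) (by omega)] <;> congr 1 <;> omega
    have ha : 4 * (k + 1 + 1) - 3 = 4 * k + 5 := by omega
    have hb : 4 * (k + 1 + 1) + 3 = 4 * k + 11 := by ring
    rw [ha, hb]
    show dsf (4 * k + 5) % 2 = dsf (4 * k + 11) % 2
    omega
  case succ.zero =>
    show dsf 1 ≡ dsf 7 [MOD 2]
    have h7 : dsf 7 = dsf 6 + dsf 5 := dsf_od 7 (by norm_num) (by norm_num)
    have h6 : dsf 6 = dsf 3 := dsf_ev 6 3 (by norm_num) (by norm_num)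
    have h5 : dsf 5 = dsf 4 + dsf 3 := dsf_od 5 (by norm_num) (by norm_num)
    have h4 : dsf 4 = dsf 2 := dsf_ev 4 2 (by norm_num) (by norm_num)
    have e1 : dsf 1 = 0 := by simp [dsf]
    have e2 : dsf 2 = 0 := by simp [dsf]
    have e3 : dsf 3 = 1 := by simp [dsf]
    show dsf 1 % 2 = dsf 7 % 2
    omega
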